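/- arXiv:2406.03639 — 5 statements merged into one kernel-verified Lean document; each statement's English description precedes it below -/
import Mathlib

section
/- For positive real numbers a, b and any real x, one has a·e^{2x} − b·x ≥ b·|x| − |b·(1 + log a − log b)|. -/
/-- For positive reals `a`, `b` and any real `x`,
`a·e^{2x} − b·x ≥ b·|x| − |b·(1 + log a − log b)|`. -/
theorem elementary_exp_linear_inequality (a b x : ℝ) (ha : 0 < a) (hb : 0 < b) :
    b * |x| - |b * (1 + Real.log a - Real.log b)| ≤ a * Real.exp (2 * x) - b * x := by
  have hexp := Real.exp_pos (2 * x)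
  have key : 2 * b * x + b * (1 + Real.log a - Real.log b) ≤ a * Real.exp (2 * x) := by
    have h1 := Real.add_one_le_exp (2 * x + Real.log a - Real.log b)
    have h2 : Real.exp (2 * x + Real.log a - Real.log b) = a * Real.exp (2 * x) / b := by
      rw [Real.exp_sub, Real.exp_add, Real.exp_log ha, Real.exp_log hb]; ring
    rw [h2, le_div_iff₀ hb] at h1
    nlinarith
  have h3 := le_abs_self (b * (1 + Real.log a - Real.log b))
  have h4 := neg_abs_le (b * (1 + Real.log a - Real.log b))
  rcases abs_cases x with ⟨h, _⟩ | ⟨h, hx⟩ <;> rw [h] <;> nlinarith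
end

section
/- Suppose u_n ∈ W^{1,2}(X, μ) on a finite measure space with ∫|∇u_n|² dμ → 0, ‖u_n‖_{L^s} = 1 for a fixed s ∈ (1,2), and ‖u_n‖_{W^{2,s}} ≤ C uniformly. If in addition v_n ≥ 0 are uniformly bounded measurable functions with ∫ v_n dμ ≥ 1/C and ∫ v_n u_n² dμ → 0, then we reach a contradiction; i.e., no such sequence exists. -/
/-!
Poincaré and vanishing energy make `u_n` close in `L²` to its mean `c_n`. Since
`c_n² / 2 ≤ u_n² + (u_n - c_n)²` pointwise, integrating against a weight `v_n` of mass
`≥ 1/C` bounds `c_n²` by `∫ v_n u_n²` and the variance, so `c_n → 0` and then `u_n → 0`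
in `L²`. On a finite measure space Hölder's inequality turns this into `∫ |u_n|^s → 0`,
contradicting `∫ |u_n|^s = 1`.
-/

open MeasureTheory Filter Topology

section

variable {X : Type*} [MeasurableSpace X] {μ : Measure X} [IsFiniteMeasure μ]

lemma integral_sq_le_two_mul_integral_sq_sub_add {f : X → ℝ} (hf : MemLp f 2 μ) (c : ℝ) :
    ∫ x, f x ^ 2 ∂μ ≤ 2 * ∫ x, (f x - c) ^ 2 ∂μ + 2 * c ^ 2 * μ.real Set.univ := by
  have hfc : Integrable (fun x => (f x - c) ^ 2) μ := (hf.sub (memLp_const c)).integrable_sq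
  calc ∫ x, f x ^ 2 ∂μ ≤ ∫ x, (2 * (f x - c) ^ 2 + 2 * c ^ 2) ∂μ :=
        integral_mono hf.integrable_sq ((hfc.const_mul 2).add (integrable_const _))
          fun x => by nlinarith [sq_nonneg (f x - 2 * c)]
    _ = 2 * ∫ x, (f x - c) ^ 2 ∂μ + 2 * c ^ 2 * μ.real Set.univ := by
        rw [integral_add (hfc.const_mul 2) (integrable_const _), integral_const_mul,
          integral_const, smul_eq_mul, mul_comm (μ.real _)]

lemma sq_mul_integral_le_integral_mul_sq_add {f v : X → ℝ} {B : ℝ} (hf : MemLp f 2 μ)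
    (hvm : AEStronglyMeasurable v μ) (hv : ∀ x, v x ∈ Set.Icc 0 B) (c : ℝ) :
    c ^ 2 / 2 * ∫ x, v x ∂μ ≤ ∫ x, v x * f x ^ 2 ∂μ + B * ∫ x, (f x - c) ^ 2 ∂μ := by
  have hvB : ∀ᵐ x ∂μ, ‖v x‖ ≤ B :=
    .of_forall fun x => (Real.norm_of_nonneg (hv x).1).trans_le (hv x).2
  have hvf : Integrable (fun x => v x * f x ^ 2) μ := hf.integrable_sq.bdd_mul hvm hvB
  have hfc : Integrable (fun x => (f x - c) ^ 2) μ := (hf.sub (memLp_const c)).integrable_sq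
  have hpt : ∀ x, c ^ 2 / 2 * v x ≤ v x * f x ^ 2 + B * (f x - c) ^ 2 := fun x => by
    obtain ⟨hv0, hvle⟩ := hv x
    have hsq : c ^ 2 / 2 ≤ f x ^ 2 + (f x - c) ^ 2 := by nlinarith [sq_nonneg (f x - c / 2)]
    nlinarith [mul_le_mul_of_nonneg_left hsq hv0,
      mul_le_mul_of_nonneg_right hvle (sq_nonneg (f x - c))]
  calc c ^ 2 / 2 * ∫ x, v x ∂μ = ∫ x, c ^ 2 / 2 * v x ∂μ := (integral_const_mul _ _).symm
    _ ≤ ∫ x, (v x * f x ^ 2 + B * (f x - c) ^ 2) ∂μ :=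
        integral_mono ((Integrable.of_bound hvm B hvB).const_mul _)
          (hvf.add (hfc.const_mul B)) hpt
    _ = ∫ x, v x * f x ^ 2 ∂μ + B * ∫ x, (f x - c) ^ 2 ∂μ := by
        rw [integral_add hvf (hfc.const_mul B), integral_const_mul]

lemma tendsto_integral_sq_of_tendsto_integral_mul_sq {f v : ℕ → X → ℝ} {c : ℕ → ℝ} {a B : ℝ}
    (ha : 0 < a) (hf : ∀ n, MemLp (f n) 2 μ) (hvm : ∀ n, AEStronglyMeasurable (v n) μ)
    (hv : ∀ n x, v n x ∈ Set.Icc 0 B) (hmass : ∀ n, a ≤ ∫ x, v n x ∂μ)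
    (hvar : Tendsto (fun n => ∫ x, (f n x - c n) ^ 2 ∂μ) atTop (𝓝 0))
    (hvf : Tendsto (fun n => ∫ x, v n x * f n x ^ 2 ∂μ) atTop (𝓝 0)) :
    Tendsto (fun n => ∫ x, f n x ^ 2 ∂μ) atTop (𝓝 0) := by
  have hc : Tendsto (fun n => c n ^ 2) atTop (𝓝 0) := by
    refine squeeze_zero (fun n => sq_nonneg _) (fun n => ?_)
      (by simpa using (hvf.add (hvar.const_mul B)).const_mul (2 / a))
    calc c n ^ 2 = 2 / a * (c n ^ 2 / 2 * a) := by field_simp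
      _ ≤ 2 / a * (c n ^ 2 / 2 * ∫ x, v n x ∂μ) := by gcongr; exact hmass n
      _ ≤ 2 / a * (∫ x, v n x * f n x ^ 2 ∂μ + B * ∫ x, (f n x - c n) ^ 2 ∂μ) := by
          gcongr; exact sq_mul_integral_le_integral_mul_sq_add (hf n) (hvm n) (hv n) (c n)
  refine squeeze_zero (fun n => integral_nonneg fun x => sq_nonneg _)
    (fun n => integral_sq_le_two_mul_integral_sq_sub_add (hf n) (c n)) ?_
  simpa using (hvar.const_mul 2).add ((hc.const_mul 2).mul_const (μ.real Set.univ))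

lemma integral_abs_rpow_le {f : X → ℝ} {s : ℝ} (hs0 : 0 < s) (hs2 : s < 2) (hf : MemLp f 2 μ) :
    ∫ x, |f x| ^ s ∂μ ≤ (∫ x, f x ^ 2 ∂μ) ^ (s / 2) * μ.real Set.univ ^ ((2 - s) / 2) := by
  have hpq : (2 / s).HolderConjugate (2 / (2 - s)) := by
    rw [Real.holderConjugate_iff, inv_div, inv_div, ← add_div, lt_div_iff₀ hs0]
    constructor <;> linarith
  have hfs : MemLp (fun x => |f x| ^ s) (ENNReal.ofReal (2 / s)) μ := by
    rw [ENNReal.ofReal_div_of_pos hs0, ENNReal.ofReal_ofNat]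
    simpa [ENNReal.toReal_ofReal hs0.le] using hf.norm_rpow_div (ENNReal.ofReal s)
  have hpow : ∀ x, (|f x| ^ s) ^ (2 / s) = f x ^ 2 := fun x => by
    rw [← Real.rpow_mul (abs_nonneg _), mul_div_cancel₀ 2 hs0.ne', Real.rpow_two, sq_abs]
  simpa [hpow, one_div_div] using integral_mul_le_Lp_mul_Lq_of_nonneg hpq
    (.of_forall fun x => by positivity) (.of_forall fun _ => zero_le_one) hfs (memLp_const 1)

lemma tendsto_integral_abs_rpow_of_tendsto_integral_sq {f : ℕ → X → ℝ} {s : ℝ} (hs0 : 0 < s)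
    (hs2 : s < 2) (hf : ∀ n, MemLp (f n) 2 μ)
    (h : Tendsto (fun n => ∫ x, f n x ^ 2 ∂μ) atTop (𝓝 0)) :
    Tendsto (fun n => ∫ x, |f n x| ^ s ∂μ) atTop (𝓝 0) := by
  have hbound : Tendsto
      (fun n => (∫ x, f n x ^ 2 ∂μ) ^ (s / 2) * μ.real Set.univ ^ ((2 - s) / 2)) atTop (𝓝 0) := by
    simpa [Real.zero_rpow (by positivity : s / 2 ≠ 0)] using
      (h.rpow_const (p := s / 2) (Or.inr (by positivity))).mul_const _
  exact squeeze_zero (fun n => integral_nonneg fun x => by positivity)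
    (fun n => integral_abs_rpow_le hs0 hs2 (hf n)) hbound

end

theorem no_degenerate_sequence_for_resolvent_bound_general
    {X : Type*} [MeasurableSpace X] (μ : Measure X) [IsFiniteMeasure μ]
    (u g v : ℕ → X → ℝ) (s Cp C B : ℝ)
    (hs : s ∈ Set.Ioo (1:ℝ) 2) (hC : 0 < C)
    (hvmeas : ∀ n, Measurable (v n))
    (hu2 : ∀ n, MemLp (u n) 2 μ)
    (hpoincare : ∀ n, ∫ x, (u n x - ((μ Set.univ).toReal)⁻¹ * ∫ y, u n y ∂μ) ^ 2 ∂μ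
        ≤ Cp * ∫ x, (g n x) ^ 2 ∂μ)
    (hgrad : Tendsto (fun n => ∫ x, (g n x) ^ 2 ∂μ) atTop (nhds 0))
    (hLs : ∀ n, ∫ x, |u n x| ^ s ∂μ = 1)
    (hv : ∀ n x, v n x ∈ Set.Icc (0:ℝ) B)
    (hvmass : ∀ n, 1 / C ≤ ∫ x, v n x ∂μ)
    (hvu : Tendsto (fun n => ∫ x, v n x * (u n x) ^ 2 ∂μ) atTop (nhds 0)) :
    False := by
  have hvar : Tendsto (fun n => ∫ x, (u n x - ((μ Set.univ).toReal)⁻¹ * ∫ y, u n y ∂μ) ^ 2 ∂μ)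
      atTop (𝓝 0) :=
    squeeze_zero (fun n => integral_nonneg fun x => sq_nonneg _) hpoincare
      (by simpa using hgrad.const_mul Cp)
  have hL2 := tendsto_integral_sq_of_tendsto_integral_mul_sq (one_div_pos.2 hC) hu2
    (fun n => (hvmeas n).aestronglyMeasurable) hv hvmass hvar hvu
  have hLs0 :=
    tendsto_integral_abs_rpow_of_tendsto_integral_sq (zero_lt_one.trans hs.1) hs.2 hu2 hL2
  simp only [hLs, tendsto_const_nhds_iff] at hLs0
  exact one_ne_zero hLs0

/-- The uniform resolvent bound argument by contradiction: there is no sequence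
`u_n` with Dirichlet energies (of gradients `g_n`) tending to `0`, `L^s`-norms equal
to `1` for fixed `s ∈ (1,2)`, satisfying a Poincaré inequality and a compact-embedding
property (an `L²`-convergent subsequence, as furnished by a uniform `W^{2,s}` bound
and Sobolev compactness), together with weights `0 ≤ v_n ≤ B` of mass `≥ 1/C`
such that `∫ v_n u_n² → 0`. -/
theorem no_degenerate_sequence_for_resolvent_bound
    {X : Type*} [MeasurableSpace X] (μ : Measure X) [IsFiniteMeasure μ]
    (u g v : ℕ → X → ℝ) (s Cp C B : ℝ)
    (hs : s ∈ Set.Ioo (1:ℝ) 2) (hC : 0 < C) (hB : 0 ≤ B) (hCp : 0 ≤ Cp)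
    (humeas : ∀ n, Measurable (u n)) (hvmeas : ∀ n, Measurable (v n))
    (huint : ∀ n, Integrable (u n) μ)
    (hu2 : ∀ n, MemLp (u n) 2 μ)
    (hpoincare : ∀ n, ∫ x, (u n x - ((μ Set.univ).toReal)⁻¹ * ∫ y, u n y ∂μ) ^ 2 ∂μ
        ≤ Cp * ∫ x, (g n x) ^ 2 ∂μ)
    (hgrad : Tendsto (fun n => ∫ x, (g n x) ^ 2 ∂μ) atTop (nhds 0))
    (hLs : ∀ n, ∫ x, |u n x| ^ s ∂μ = 1)
    (hcompact : ∃ w : X → ℝ, ∃ φ : ℕ → ℕ, StrictMono φ ∧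
        Tendsto (fun k => ∫ x, (u (φ k) x - w x) ^ 2 ∂μ) atTop (nhds 0))
    (hv : ∀ n x, v n x ∈ Set.Icc (0:ℝ) B)
    (hvmass : ∀ n, 1 / C ≤ ∫ x, v n x ∂μ)
    (hvu : Tendsto (fun n => ∫ x, v n x * (u n x) ^ 2 ∂μ) atTop (nhds 0)) :
    False :=
  no_degenerate_sequence_for_resolvent_bound_general μ u g v s Cp C B hs hC hvmeas hu2 hpoincare
    hgrad hLs hv hvmass hvu
end

section
/- Let φ_t (t ∈ ℝ) satisfy the geodesic ODE in the space of Kähler potentials via a holomorphic flow: if σ_t are diffeomorphisms generated by Re(v) with σ_t*ω = ω + dd^c φ_t, ι_{Im v}ω = dΦ, and normalization ∫ φ̇_t ω_{φ_t} = 0, then φ̇_t = σ_t*Φ and φ̈_t = 2|∂φ̇_t|²_{ω_{φ_t}}; i.e., φ̈_t − |dφ̇_t|²_{ω_{φ_t}} = 0. In the model case Σ = ℙ¹, σ_t(z) = e^{2t}z, ω₀ = (V/2π)ω_FS, the explicit potential φ_t = (V/4π)(log((1 + e^{4t}|z|²)/(1+|z|²)) − 2t) satisfies φ̈_t − |dφ̇_t|²_{ω_t}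 = 0 where ω_t = ω₀ + 2i∂∂̄φ_t. -/
/-- The explicit geodesic potential `φ_t(z) = (V/4π)(log((1+e^{4t}|z|²)/(1+|z|²)) − 2t)`
on `ℙ¹`, written as a function of `t` and `r = |z|²`. -/
noncomputable def geodesicPotential (V t r : ℝ) : ℝ :=
  (V / (4 * Real.pi)) * (Real.log ((1 + Real.exp (4 * t) * r) / (1 + r)) - 2 * t)

/-- The coefficient `g_{z z̄}` of the metric `ω_t = σ_t^*ω₀ = ω₀ + 2i∂∂̄φ_t`, where
`ω₀ = (V/2π)ω_FS`, as a function of `t` and `r = |z|²`. -/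
noncomputable def geodesicMetric (V t r : ℝ) : ℝ :=
  (V / (2 * Real.pi)) * Real.exp (4 * t) / (1 + Real.exp (4 * t) * r) ^ 2

/-- `φ̇_t = ∂φ_t/∂t`. -/
noncomputable def geodesicPotentialDot (V t r : ℝ) : ℝ :=
  deriv (fun u => geodesicPotential V u r) t

lemma geodesicPotentialDot_eq (V t r : ℝ) (h1 : (-1 : ℝ) < r)
    (h2 : -Real.exp (-(4 * t)) < r) :
    geodesicPotentialDot V t r =
      V / (2 * Real.pi) * ((Real.exp (4 * t) * r - 1) / (1 + Real.exp (4 * t) * r)) := by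
  have hE : (0 : ℝ) < Real.exp (4 * t) := Real.exp_pos _
  have key : Real.exp (4 * t) * (-Real.exp (-(4 * t))) = -1 := by
    rw [Real.exp_neg]; field_simp
  have hd : (0 : ℝ) < 1 + Real.exp (4 * t) * r := by
    have := mul_lt_mul_of_pos_left h2 hE
    rw [key] at this; linarith
  have hr : (0 : ℝ) < 1 + r := by linarith
  have h4 : HasDerivAt (fun u : ℝ => 4 * u) 4 t := by
    simpa using (hasDerivAt_id t).const_mul (4 : ℝ)
  have hexp : HasDerivAt (fun u => Real.exp (4 * u)) (Real.exp (4 * t) * 4) t := h4.exp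
  have hmul : HasDerivAt (fun u => Real.exp (4 * u) * r) (Real.exp (4 * t) * 4 * r) t :=
    hexp.mul_const r
  have hadd : HasDerivAt (fun u => 1 + Real.exp (4 * u) * r)
      (Real.exp (4 * t) * 4 * r) t := hmul.const_add 1
  have hdiv : HasDerivAt (fun u => (1 + Real.exp (4 * u) * r) / (1 + r))
      (Real.exp (4 * t) * 4 * r / (1 + r)) t := hadd.div_const (1 + r)
  have hne : (1 + Real.exp (4 * t) * r) / (1 + r) ≠ 0 := ne_of_gt (div_pos hd hr)
  have hlog : HasDerivAt (fun u => Real.log ((1 + Real.exp (4 * u) * r) / (1 + r)))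
      ((Real.exp (4 * t) * 4 * r / (1 + r)) / ((1 + Real.exp (4 * t) * r) / (1 + r))) t :=
    hdiv.log hne
  have h2u : HasDerivAt (fun u : ℝ => 2 * u) 2 t := by
    simpa using (hasDerivAt_id t).const_mul (2 : ℝ)
  have hfull : HasDerivAt (fun u => geodesicPotential V u r)
      (V / (4 * Real.pi) *
        ((Real.exp (4 * t) * 4 * r / (1 + r)) / ((1 + Real.exp (4 * t) * r) / (1 + r)) - 2)) t := by
    simpa [geodesicPotential] using (hlog.sub h2u).const_mul (V / (4 * Real.pi))
  rw [geodesicPotentialDot, hfull.deriv]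
  have hπ : Real.pi ≠ 0 := Real.pi_ne_zero
  field_simp
  ring

/-- The explicit family `φ_t` on `ℙ¹` satisfies the geodesic equation
`φ̈_t − |dφ̇_t|²_{ω_t} = 0`, where `|dφ̇|²_ω = 2 g^{z z̄}|∂_z φ̇|²` and
`|∂_z φ̇|² = |z|²·(∂_r φ̇)²` for a rotationally symmetric function of `r = |z|²`. -/
theorem geodesic_equation_explicit (V : ℝ) (hV : 0 < V) (t : ℝ) (z : ℂ) :
    deriv (fun u => geodesicPotentialDot V u (Complex.normSq z)) t =
      2 * (geodesicMetric V t (Complex.normSq z))⁻¹ * Complex.normSq z *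
        (deriv (fun ρ => geodesicPotentialDot V t ρ) (Complex.normSq z)) ^ 2 := by
  set r := Complex.normSq z with hrdef
  have hr : 0 ≤ r := Complex.normSq_nonneg z
  have hE : (0 : ℝ) < Real.exp (4 * t) := Real.exp_pos _
  have hd : (0 : ℝ) < 1 + Real.exp (4 * t) * r := by positivity
  have hπ : (0 : ℝ) < Real.pi := Real.pi_pos
  -- LHS
  have hL : (fun u => geodesicPotentialDot V u r) =
      fun u => V / (2 * Real.pi) * ((Real.exp (4 * u) * r - 1) / (1 + Real.exp (4 * u) * r)) :=
    funext fun u => geodesicPotentialDot_eq V u r (by linarith)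
      (by have := Real.exp_pos (-(4 * u)); linarith)
  rw [hL]
  have h4 : HasDerivAt (fun u : ℝ => 4 * u) 4 t := by
    simpa using (hasDerivAt_id t).const_mul (4 : ℝ)
  have hexp : HasDerivAt (fun u => Real.exp (4 * u)) (Real.exp (4 * t) * 4) t := h4.exp
  have hnum : HasDerivAt (fun u => Real.exp (4 * u) * r - 1)
      (Real.exp (4 * t) * 4 * r) t := (hexp.mul_const r).sub_const 1
  have hden : HasDerivAt (fun u => 1 + Real.exp (4 * u) * r)
      (Real.exp (4 * t) * 4 * r) t := (hexp.mul_const r).const_add 1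
  have hquot : HasDerivAt
      (fun u => (Real.exp (4 * u) * r - 1) / (1 + Real.exp (4 * u) * r))
      ((Real.exp (4 * t) * 4 * r * (1 + Real.exp (4 * t) * r) -
        (Real.exp (4 * t) * r - 1) * (Real.exp (4 * t) * 4 * r)) /
        (1 + Real.exp (4 * t) * r) ^ 2) t := hnum.div hden hd.ne'
  have hLfull : HasDerivAt
      (fun u => V / (2 * Real.pi) *
        ((Real.exp (4 * u) * r - 1) / (1 + Real.exp (4 * u) * r)))
      (V / (2 * Real.pi) *
        ((Real.exp (4 * t) * 4 * r * (1 + Real.exp (4 * t) * r) -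
          (Real.exp (4 * t) * r - 1) * (Real.exp (4 * t) * 4 * r)) /
          (1 + Real.exp (4 * t) * r) ^ 2)) t := hquot.const_mul _
  rw [hLfull.deriv]
  -- RHS
  have hev : (fun ρ => geodesicPotentialDot V t ρ) =ᶠ[nhds r]
      fun ρ => V / (2 * Real.pi) * ((Real.exp (4 * t) * ρ - 1) / (1 + Real.exp (4 * t) * ρ)) := by
    have h1 : ∀ᶠ ρ in nhds r, (-1 : ℝ) < ρ := eventually_gt_nhds (by linarith)
    have h2 : ∀ᶠ ρ in nhds r, -Real.exp (-(4 * t)) < ρ :=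
      eventually_gt_nhds (by have := Real.exp_pos (-(4 * t)); linarith)
    filter_upwards [h1, h2] with ρ hρ1 hρ2
    exact geodesicPotentialDot_eq V t ρ hρ1 hρ2
  rw [hev.deriv_eq]
  have hnum' : HasDerivAt (fun ρ => Real.exp (4 * t) * ρ - 1) (Real.exp (4 * t)) r :=
    (hasDerivAt_id r).const_mul (Real.exp (4 * t)) |>.sub_const 1 |>.congr_deriv (by ring)
  have hden' : HasDerivAt (fun ρ => 1 + Real.exp (4 * t) * ρ) (Real.exp (4 * t)) r :=
    ((hasDerivAt_id r).const_mul (Real.exp (4 * t)) |>.const_add 1).congr_deriv (by ring)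
  have hquot' : HasDerivAt
      (fun ρ => (Real.exp (4 * t) * ρ - 1) / (1 + Real.exp (4 * t) * ρ))
      ((Real.exp (4 * t) * (1 + Real.exp (4 * t) * r) -
        (Real.exp (4 * t) * r - 1) * Real.exp (4 * t)) /
        (1 + Real.exp (4 * t) * r) ^ 2) r := hnum'.div hden' hd.ne'
  have hRfull := (hquot'.const_mul (V / (2 * Real.pi))).deriv
  rw [hRfull]
  rw [geodesicMetric]
  field_simp
  ring
end

section
/- Integrating the vortex equation iF_h + (1/2)(|φ|²_h − τ)ω = 0 over Σ gives ∫_Σ |φ|²_h ω = τV − 4πN; consequently, if the vortex equation admits a solution with a not-identically-zero holomorphic section φ, then V > 4πN/τ (strict, since |φ|²_h > 0 on a set of positive measure). -/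
/-!
The vortex equation says `|φ|²_h = τ - 2F` pointwise, so integrating against the finite measure `ω`
turns the Chern–Weil normalisation `∫ F = 2πN` into `∫ |φ|²_h = τV - 4πN`. Since `|φ|²_h ≥ 0` is
positive on a set of positive measure, this integral is positive, i.e. `τV > 4πN`.
-/

open MeasureTheory

section

variable {X : Type*} [MeasurableSpace X] {μ : Measure X}

lemma isFiniteMeasure_of_toReal_measure_univ_pos (h : 0 < (μ Set.univ).toReal) :
    IsFiniteMeasure μ :=
  ⟨(ENNReal.toReal_pos_iff.1 h).2⟩

lemma integral_pos_of_nonneg_of_measure_setOf_pos {f : X → ℝ} (hf : 0 ≤ f)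
    (hfi : Integrable f μ) (hpos : 0 < μ {x | 0 < f x}) : 0 < ∫ x, f x ∂μ :=
  (integral_pos_iff_support_of_nonneg hf hfi).2 <|
    hpos.trans_le <| measure_mono fun _ (hx : 0 < _) => hx.ne'

lemma integral_const_sub_const_mul [IsFiniteMeasure μ] {f : X → ℝ} (hf : Integrable f μ)
    (c a : ℝ) : ∫ x, (c - a * f x) ∂μ = c * μ.real Set.univ - a * ∫ x, f x ∂μ := by
  rw [integral_sub (integrable_const c) (hf.const_mul a), integral_const, integral_const_mul,
    smul_eq_mul, mul_comm c]

end

/-- Integrating the vortex equation `iF_h + (1/2)(|φ|²_h − τ)ω = 0` over `Σ` gives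
`∫ |φ|²_h ω = τV − 4πN`; consequently, if the vortex equation has a solution with a
not-identically-zero holomorphic section `φ`, then `V > 4πN/τ`.  Here `μ` is the
measure `ω` of total volume `V`, `F = iΛ_ω F_h` with `∫ F = 2πN`, and
`φsq = |φ|²_h ≥ 0` is positive on a set of positive measure. -/
theorem vortex_integral_identity_and_volume_bound
    {X : Type*} [MeasurableSpace X] (μ : Measure X)
    (F φsq : X → ℝ) (τ V N : ℝ) (hτ : 0 < τ) (hV : 0 < V)
    (hμ : (μ Set.univ).toReal = V)
    (hvortex : ∀ x, F x + (1 / 2) * (φsq x - τ) = 0)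
    (hFint : Integrable F μ)
    (hChern : ∫ x, F x ∂μ = 2 * Real.pi * N)
    (hφpos : ∀ x, 0 ≤ φsq x)
    (hsupp : 0 < μ {x | 0 < φsq x}) :
    (∫ x, φsq x ∂μ = τ * V - 4 * Real.pi * N) ∧ 4 * Real.pi * N / τ < V := by
  have : IsFiniteMeasure μ := isFiniteMeasure_of_toReal_measure_univ_pos (hμ ▸ hV)
  have hφsq : φsq = fun x => τ - 2 * F x := funext fun x => by linarith [hvortex x]
  have hφint : Integrable φsq μ := hφsq ▸ (integrable_const τ).sub (hFint.const_mul 2)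
  have hidentity : ∫ x, φsq x ∂μ = τ * V - 4 * Real.pi * N := by
    rw [hφsq, integral_const_sub_const_mul hFint, hChern, measureReal_def, hμ]
    ring
  have hintegral_pos : 0 < ∫ x, φsq x ∂μ :=
    integral_pos_of_nonneg_of_measure_setOf_pos hφpos hφint hsupp
  refine ⟨hidentity, ?_⟩
  rw [div_lt_iff₀ hτ]
  linarith
end

section
/- Along an affine segment f_t = (1−t)f₀ + t f₁ in C^∞(Σ), the functional M̂(f) = ∫_Σ i∂f ∧ ∂̄f + (1/4)∫_Σ |φ|²_{h₀} e^{2f} ω − (τ/2V)(V − 4πN/τ)∫_Σ f ω − (1/4)∫_Σ |φ|²_{h₀} ω satisfies (d²/dt²) M̂(f_t) = 2∫_Σ i∂(f₁−f₀) ∧ ∂̄(f₁−f₀) + ∫_Σ (f₁−f₀)²|φ|²_{h₀} e^{2f_t} ω ≥ 0, with equality for all t only if f₁ = f₀ (given φ ≢ 0). Hence M̂ is convex along affine segments and its critical point, if it exists, is unique. -/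
open MeasureTheory

/-!
Writing `d = f₁ - f₀`, the Dirichlet term `B(f_t, f_t)` is a quadratic polynomial in `t` with
leading coefficient `B(d, d)`, the linear term is affine in `t`, and differentiating the
exponential term twice under the integral sign (dominated thanks to the uniform bounds on `f₀`,
`f₁`, `φ₀`) brings down `(2d)²`. This gives `(M̂ ∘ f)'' = 2 B(d, d) + ∫ d² φ₀ e^{2 f_t} ≥ 0`,
hence convexity. If the second derivative vanishes somewhere then `d² φ₀ = 0` a.e., so `d = 0`
a.e. because `φ₀ > 0` a.e.; and if `f₀` and `f₁` are both critical, the monotone first derivative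
vanishes on `[0, 1]`, so the second derivative vanishes at `t = 1/2`.
-/

lemma abs_mul_exp_add_mul_le {w a b s Cw Ca Cb R : ℝ} (hw : |w| ≤ Cw) (ha : |a| ≤ Ca)
    (hb : |b| ≤ Cb) (hs : |s| ≤ R) :
    |w * Real.exp (a + s * b)| ≤ Cw * Real.exp (Ca + R * Cb) := by
  have hsb : s * b ≤ R * Cb := (le_abs_self _).trans <| by
    rw [abs_mul]
    exact mul_le_mul hs hb (abs_nonneg _) ((abs_nonneg _).trans hs)
  rw [abs_mul, Real.abs_exp]
  exact mul_le_mul hw (Real.exp_le_exp.2 (by linarith [le_abs_self a])) (Real.exp_pos _).le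
    ((abs_nonneg _).trans hw)

section AffineExponent

variable {X : Type*} [MeasurableSpace X] {μ : Measure X} [IsFiniteMeasure μ]
  {w a b : X → ℝ} {Cw Ca Cb : ℝ}

lemma integrable_mul_exp_affine (hw : Measurable w) (hwC : ∀ x, |w x| ≤ Cw)
    (ha : Measurable a) (haC : ∀ x, |a x| ≤ Ca) (hb : Measurable b) (hbC : ∀ x, |b x| ≤ Cb)
    (s : ℝ) : Integrable (fun x => w x * Real.exp (a x + s * b x)) μ :=
  Integrable.of_bound (hw.mul (ha.add (hb.const_mul s)).exp).aestronglyMeasurable _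
    (ae_of_all _ fun x => abs_mul_exp_add_mul_le (hwC x) (haC x) (hbC x) le_rfl)

lemma hasDerivAt_integral_mul_exp_affine (hw : Measurable w) (hwC : ∀ x, |w x| ≤ Cw)
    (ha : Measurable a) (haC : ∀ x, |a x| ≤ Ca) (hb : Measurable b) (hbC : ∀ x, |b x| ≤ Cb)
    (t : ℝ) :
    HasDerivAt (fun s => ∫ x, w x * Real.exp (a x + s * b x) ∂μ)
      (∫ x, b x * w x * Real.exp (a x + t * b x) ∂μ) t := by
  have hbw : ∀ x, |b x * w x| ≤ Cb * Cw := fun x => by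
    rw [abs_mul]
    exact mul_le_mul (hbC x) (hwC x) (abs_nonneg _) ((abs_nonneg _).trans (hbC x))
  refine (hasDerivAt_integral_of_dominated_loc_of_deriv_le (Metric.ball_mem_nhds t one_pos)
    (F' := fun s x => b x * w x * Real.exp (a x + s * b x))
    (bound := fun _ => Cb * Cw * Real.exp (Ca + (|t| + 1) * Cb))
    (.of_forall fun s => (integrable_mul_exp_affine hw hwC ha haC hb hbC s).aestronglyMeasurable)
    (integrable_mul_exp_affine hw hwC ha haC hb hbC t)
    (integrable_mul_exp_affine (w := fun x => b x * w x) (hb.mul hw) hbw ha haC hb hbC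
      t).aestronglyMeasurable
    (ae_of_all _ fun x s hs => ?_) (integrable_const _) (ae_of_all _ fun x s _ => ?_)).2
  · have hst : |s| ≤ |t| + 1 := by
      have := abs_sub_abs_le_abs_sub s t
      rw [Metric.mem_ball, Real.dist_eq] at hs
      linarith
    exact abs_mul_exp_add_mul_le (hbw x) (haC x) (hbC x) hst
  · exact ((((hasDerivAt_id' s).mul_const (b x)).const_add (a x)).exp.const_mul (w x)).congr_deriv
      (by ring)

end AffineExponent

lemma segment_exponent (u v s : ℝ) : 2 * ((1 - s) * u + s * v) = 2 * u + s * (2 * (v - u)) := by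
  ring

lemma abs_segment_coeffs_le {u v M : ℝ} (hu : |u| ≤ M) (hv : |v| ≤ M) :
    |2 * u| ≤ 2 * M ∧ |2 * (v - u)| ≤ 2 * (M + M) := by
  rw [abs_mul, abs_mul, abs_two]
  exact ⟨by linarith, by linarith [abs_sub v u]⟩

section Segment

variable {X : Type*} [MeasurableSpace X] {μ : Measure X} [IsFiniteMeasure μ]
  {w f₀ f₁ : X → ℝ} {Cw M : ℝ}

lemma integrable_mul_exp_segment (hw : Measurable w) (hwC : ∀ x, |w x| ≤ Cw)
    (hf₀ : Measurable f₀) (hf₁ : Measurable f₁) (hf₀b : ∀ x, |f₀ x| ≤ M)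
    (hf₁b : ∀ x, |f₁ x| ≤ M) (t : ℝ) :
    Integrable (fun x => w x * Real.exp (2 * ((1 - t) * f₀ x + t * f₁ x))) μ := by
  simpa only [segment_exponent] using integrable_mul_exp_affine (a := fun x => 2 * f₀ x)
    (b := fun x => 2 * (f₁ x - f₀ x)) hw hwC (hf₀.const_mul 2)
    (fun x => (abs_segment_coeffs_le (hf₀b x) (hf₁b x)).1) ((hf₁.sub hf₀).const_mul 2)
    (fun x => (abs_segment_coeffs_le (hf₀b x) (hf₁b x)).2) t

lemma hasDerivAt_integral_mul_exp_segment (hw : Measurable w) (hwC : ∀ x, |w x| ≤ Cw)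
    (hf₀ : Measurable f₀) (hf₁ : Measurable f₁) (hf₀b : ∀ x, |f₀ x| ≤ M)
    (hf₁b : ∀ x, |f₁ x| ≤ M) (t : ℝ) :
    HasDerivAt (fun s => ∫ x, w x * Real.exp (2 * ((1 - s) * f₀ x + s * f₁ x)) ∂μ)
      (∫ x, 2 * (f₁ x - f₀ x) * w x * Real.exp (2 * ((1 - t) * f₀ x + t * f₁ x)) ∂μ) t := by
  simpa only [segment_exponent] using hasDerivAt_integral_mul_exp_affine (a := fun x => 2 * f₀ x)
    (b := fun x => 2 * (f₁ x - f₀ x)) hw hwC (hf₀.const_mul 2)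
    (fun x => (abs_segment_coeffs_le (hf₀b x) (hf₁b x)).1) ((hf₁.sub hf₀).const_mul 2)
    (fun x => (abs_segment_coeffs_le (hf₀b x) (hf₁b x)).2) t

end Segment

lemma bilin_segment_eq {E : Type*} [AddCommGroup E] [Module ℝ E] (B : E → E → ℝ)
    (hBsymm : ∀ u v, B u v = B v u) (hBadd : ∀ u v w, B (u + v) w = B u w + B v w)
    (hBsmul : ∀ (a : ℝ) (u v : E), B (a • u) v = a * B u v) (u v : E) (t : ℝ) :
    B ((1 - t) • u + t • v) ((1 - t) • u + t • v)
      = B u u + 2 * t * B (v - u) u + t ^ 2 * B (v - u) (v - u) := by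
  have hBadd' : ∀ u v w, B u (v + w) = B u v + B u w := fun u v w => by
    rw [hBsymm, hBadd, hBsymm v, hBsymm w]
  have hBsmul' : ∀ (a : ℝ) (u v : E), B u (a • v) = a * B u v := fun a u v => by
    rw [hBsymm, hBsmul, hBsymm]
  rw [show (1 - t) • u + t • v = u + t • (v - u) by module]
  simp only [hBadd, hBadd', hBsmul, hBsmul', hBsymm u (v - u)]
  ring

lemma hasDerivAt_bilin_segment {E : Type*} [AddCommGroup E] [Module ℝ E] (B : E → E → ℝ)
    (hBsymm : ∀ u v, B u v = B v u) (hBadd : ∀ u v w, B (u + v) w = B u w + B v w)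
    (hBsmul : ∀ (a : ℝ) (u v : E), B (a • u) v = a * B u v) (u v : E) (t : ℝ) :
    HasDerivAt (fun s : ℝ => B ((1 - s) • u + s • v) ((1 - s) • u + s • v))
      (2 * B (v - u) u + 2 * t * B (v - u) (v - u)) t := by
  simp only [bilin_segment_eq B hBsymm hBadd hBsmul]
  refine (((((hasDerivAt_id' t).const_mul 2).mul_const (B (v - u) u)).const_add (B u u)).add
    ((hasDerivAt_pow 2 t).mul_const (B (v - u) (v - u)))).congr_deriv ?_
  ring

lemma hasDerivAt_integral_segment {X : Type*} [MeasurableSpace X] {μ : Measure X}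
    {f₀ f₁ : X → ℝ} (hf₀ : Integrable f₀ μ) (hf₁ : Integrable f₁ μ) (t : ℝ) :
    HasDerivAt (fun s => ∫ x, ((1 - s) * f₀ x + s * f₁ x) ∂μ)
      ((∫ x, f₁ x ∂μ) - ∫ x, f₀ x ∂μ) t := by
  have hlin : (fun s => ∫ x, ((1 - s) * f₀ x + s * f₁ x) ∂μ)
      = fun s => (1 - s) * (∫ x, f₀ x ∂μ) + s * ∫ x, f₁ x ∂μ := funext fun s => by
    rw [integral_add (hf₀.const_mul _) (hf₁.const_mul _), integral_const_mul, integral_const_mul]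
  rw [hlin]
  exact ((((hasDerivAt_id' t).const_sub 1).mul_const _).add
    ((hasDerivAt_id' t).mul_const _)).congr_deriv (by ring)

lemma Monotone.deriv_eq_zero_of_eq {f : ℝ → ℝ} (hf : Monotone f) {a b c : ℝ} (hab : f a = f b)
    (hc : c ∈ Set.Ioo a b) : deriv f c = 0 := by
  have hconst : f =ᶠ[nhds c] fun _ => f a := by
    filter_upwards [Icc_mem_nhds hc.1 hc.2] with y hy
    exact le_antisymm (hab ▸ hf hy.2) (hf hy.1)
  rw [hconst.deriv_eq, deriv_const]

lemma ae_eq_of_integral_sq_sub_mul_eq_zero {X : Type*} [MeasurableSpace X] {μ : Measure X}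
    {u v ρ : X → ℝ} (hρ : ∀ᵐ x ∂μ, 0 < ρ x) (hint : Integrable (fun x => (u x - v x) ^ 2 * ρ x) μ)
    (h : ∫ x, (u x - v x) ^ 2 * ρ x ∂μ = 0) : u =ᵐ[μ] v := by
  have hnn : 0 ≤ᵐ[μ] fun x => (u x - v x) ^ 2 * ρ x := by
    filter_upwards [hρ] with x hx
    exact mul_nonneg (sq_nonneg _) hx.le
  filter_upwards [(integral_eq_zero_iff_of_nonneg_ae hnn hint).1 h, hρ] with x hx hρx
  have : (u x - v x) ^ 2 = 0 := (mul_eq_zero.1 hx).resolve_right hρx.ne'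
  linarith [pow_eq_zero_iff (n := 2) two_ne_zero |>.1 this]

section Vortex

variable {X : Type*} [MeasurableSpace X]

noncomputable def vortexFunctionalSegment (μ : Measure X) (B : (X → ℝ) → (X → ℝ) → ℝ)
    (f₀ f₁ φ₀ : X → ℝ) (k c₀ t : ℝ) : ℝ :=
  B ((1 - t) • f₀ + t • f₁) ((1 - t) • f₀ + t • f₁)
    + (1 / 4) * (∫ x, φ₀ x * Real.exp (2 * ((1 - t) * f₀ x + t * f₁ x)) ∂μ)
    - k * (∫ x, ((1 - t) * f₀ x + t * f₁ x) ∂μ) - c₀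

noncomputable def vortexSecondVariation (μ : Measure X) (B : (X → ℝ) → (X → ℝ) → ℝ)
    (f₀ f₁ φ₀ : X → ℝ) (t : ℝ) : ℝ :=
  2 * B (f₁ - f₀) (f₁ - f₀)
    + ∫ x, (f₁ x - f₀ x) ^ 2 * φ₀ x * Real.exp (2 * ((1 - t) * f₀ x + t * f₁ x)) ∂μ

variable {μ : Measure X} {B : (X → ℝ) → (X → ℝ) → ℝ} {f₀ f₁ φ₀ : X → ℝ} {k c₀ M : ℝ}

lemma hasDerivAt_vortexFunctionalSegment [IsFiniteMeasure μ] (hBsymm : ∀ u v, B u v = B v u)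
    (hBadd : ∀ u v w, B (u + v) w = B u w + B v w)
    (hBsmul : ∀ (a : ℝ) (u v : X → ℝ), B (a • u) v = a * B u v)
    (hf₀ : Measurable f₀) (hf₁ : Measurable f₁) (hφ : Measurable φ₀)
    (hf₀b : ∀ x, |f₀ x| ≤ M) (hf₁b : ∀ x, |f₁ x| ≤ M) (hφb : ∀ x, |φ₀ x| ≤ M)
    (hf₀int : Integrable f₀ μ) (hf₁int : Integrable f₁ μ) (t : ℝ) :
    HasDerivAt (vortexFunctionalSegment μ B f₀ f₁ φ₀ k c₀)
      (2 * B (f₁ - f₀) f₀ + 2 * t * B (f₁ - f₀) (f₁ - f₀)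
        + (1 / 4) * (∫ x, 2 * (f₁ x - f₀ x) * φ₀ x
            * Real.exp (2 * ((1 - t) * f₀ x + t * f₁ x)) ∂μ)
        - k * ((∫ x, f₁ x ∂μ) - ∫ x, f₀ x ∂μ)) t :=
  ((((hasDerivAt_bilin_segment B hBsymm hBadd hBsmul f₀ f₁ t).add
    ((hasDerivAt_integral_mul_exp_segment hφ hφb hf₀ hf₁ hf₀b hf₁b t).const_mul (1 / 4))).sub
    ((hasDerivAt_integral_segment hf₀int hf₁int t).const_mul k)).sub_const c₀)

lemma hasDerivAt_deriv_vortexFunctionalSegment [IsFiniteMeasure μ]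
    (hBsymm : ∀ u v, B u v = B v u) (hBadd : ∀ u v w, B (u + v) w = B u w + B v w)
    (hBsmul : ∀ (a : ℝ) (u v : X → ℝ), B (a • u) v = a * B u v)
    (hf₀ : Measurable f₀) (hf₁ : Measurable f₁) (hφ : Measurable φ₀)
    (hf₀b : ∀ x, |f₀ x| ≤ M) (hf₁b : ∀ x, |f₁ x| ≤ M) (hφb : ∀ x, |φ₀ x| ≤ M)
    (hf₀int : Integrable f₀ μ) (hf₁int : Integrable f₁ μ) (t : ℝ) :
    HasDerivAt (deriv (vortexFunctionalSegment μ B f₀ f₁ φ₀ k c₀))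
      (vortexSecondVariation μ B f₀ f₁ φ₀ t) t := by
  rw [funext fun s => (hasDerivAt_vortexFunctionalSegment (k := k) (c₀ := c₀) hBsymm hBadd hBsmul
    hf₀ hf₁ hφ hf₀b hf₁b hφb hf₀int hf₁int s).deriv]
  have hwC : ∀ x, |2 * (f₁ x - f₀ x) * φ₀ x| ≤ 2 * (M + M) * M := fun x => by
    have hd := (abs_segment_coeffs_le (hf₀b x) (hf₁b x)).2
    rw [abs_mul]
    exact mul_le_mul hd (hφb x) (abs_nonneg _) ((abs_nonneg _).trans hd)
  refine (((((hasDerivAt_id' t).const_mul 2).mul_const _).const_add _).add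
    ((hasDerivAt_integral_mul_exp_segment (w := fun x => 2 * (f₁ x - f₀ x) * φ₀ x)
      (((hf₁.sub hf₀).const_mul 2).mul hφ) hwC hf₀ hf₁ hf₀b hf₁b t).const_mul (1 / 4))).sub_const _
    |>.congr_deriv ?_
  rw [vortexSecondVariation, ← integral_const_mul, mul_one]
  congr 1
  congr with x
  ring

lemma vortexSecondVariation_nonneg (hBpos : ∀ u, 0 ≤ B u u) (hφ0 : ∀ x, 0 ≤ φ₀ x) (t : ℝ) :
    0 ≤ vortexSecondVariation μ B f₀ f₁ φ₀ t :=
  add_nonneg (mul_nonneg zero_le_two (hBpos _)) <| integral_nonneg fun x =>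
    mul_nonneg (mul_nonneg (sq_nonneg _) (hφ0 x)) (Real.exp_pos _).le

lemma ae_eq_of_vortexSecondVariation_eq_zero [IsFiniteMeasure μ] (hBpos : ∀ u, 0 ≤ B u u)
    (hφpos : ∀ᵐ x ∂μ, 0 < φ₀ x)
    (hf₀ : Measurable f₀) (hf₁ : Measurable f₁) (hφ : Measurable φ₀)
    (hf₀b : ∀ x, |f₀ x| ≤ M) (hf₁b : ∀ x, |f₁ x| ≤ M) (hφb : ∀ x, |φ₀ x| ≤ M) {t : ℝ}
    (h : vortexSecondVariation μ B f₀ f₁ φ₀ t = 0) : f₁ =ᵐ[μ] f₀ := by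
  have hwC : ∀ x, |(f₁ x - f₀ x) ^ 2 * φ₀ x| ≤ (M + M) ^ 2 * M := fun x => by
    have hd : |f₁ x - f₀ x| ≤ M + M := (abs_sub _ _).trans (add_le_add (hf₁b x) (hf₀b x))
    rw [abs_mul, abs_pow]
    exact mul_le_mul (pow_le_pow_left₀ (abs_nonneg _) hd 2) (hφb x) (abs_nonneg _)
      (pow_nonneg ((abs_nonneg _).trans hd) 2)
  have hint := integrable_mul_exp_segment (μ := μ) (w := fun x => (f₁ x - f₀ x) ^ 2 * φ₀ x)
    (((hf₁.sub hf₀).pow_const 2).mul hφ) hwC hf₀ hf₁ hf₀b hf₁b t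
  have hzero : ∫ x, (f₁ x - f₀ x) ^ 2 * φ₀ x
      * Real.exp (2 * ((1 - t) * f₀ x + t * f₁ x)) ∂μ = 0 := by
    have hB := hBpos (f₁ - f₀)
    have hI : 0 ≤ ∫ x, (f₁ x - f₀ x) ^ 2 * φ₀ x
        * Real.exp (2 * ((1 - t) * f₀ x + t * f₁ x)) ∂μ := integral_nonneg_of_ae <| by
      filter_upwards [hφpos] with x hx
      positivity
    rw [vortexSecondVariation] at h
    linarith
  refine ae_eq_of_integral_sq_sub_mul_eq_zero
    (ρ := fun x => φ₀ x * Real.exp (2 * ((1 - t) * f₀ x + t * f₁ x))) ?_ ?_ ?_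
  · filter_upwards [hφpos] with x hx
    positivity
  · simpa only [mul_assoc] using hint
  · simpa only [mul_assoc] using hzero

end Vortex

/-- Along an affine segment `f_t = (1−t)f₀ + t f₁`, the vortex functional
`M̂(f) = B(f,f) + (1/4)∫ φ₀ e^{2f} dμ − k∫ f dμ − c₀` (with `B` the symmetric
nonnegative Dirichlet bilinear form `B(u,v) = ∫ i∂u∧∂̄v`, `φ₀ = |φ|²_{h₀}`) satisfies
`(d²/dt²) M̂(f_t) = 2B(f₁−f₀, f₁−f₀) + ∫ (f₁−f₀)² φ₀ e^{2f_t} dμ ≥ 0`; hence `M̂` is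
convex along affine segments, with equality for all `t` only if `f₁ = f₀` (a.e., since
`φ₀ > 0` a.e.), and a critical point, if it exists, is unique. -/
theorem vortex_functional_affine_convexity
    {X : Type*} [MeasurableSpace X] (μ : Measure X) [IsFiniteMeasure μ]
    (B : (X → ℝ) → (X → ℝ) → ℝ) (f₀ f₁ φ₀ : X → ℝ) (k c₀ M : ℝ)
    (hBsymm : ∀ u v, B u v = B v u)
    (hBadd : ∀ u v w, B (u + v) w = B u w + B v w)
    (hBsmul : ∀ (a : ℝ) (u v : X → ℝ), B (a • u) v = a * B u v)
    (hBpos : ∀ u, 0 ≤ B u u)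
    (hf₀ : Measurable f₀) (hf₁ : Measurable f₁) (hφm : Measurable φ₀)
    (hφ0 : ∀ x, 0 ≤ φ₀ x) (hφpos : ∀ᵐ x ∂μ, 0 < φ₀ x)
    (hbd : ∀ x, |f₀ x| ≤ M ∧ |f₁ x| ≤ M ∧ φ₀ x ≤ M)
    (hf₀int : Integrable f₀ μ) (hf₁int : Integrable f₁ μ) :
    let g : ℝ → ℝ := fun t =>
      B ((1 - t) • f₀ + t • f₁) ((1 - t) • f₀ + t • f₁)
        + (1 / 4) * (∫ x, φ₀ x * Real.exp (2 * ((1 - t) * f₀ x + t * f₁ x)) ∂μ)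
        - k * (∫ x, ((1 - t) * f₀ x + t * f₁ x) ∂μ) - c₀
    (∀ t : ℝ, iteratedDeriv 2 g t =
        2 * B (f₁ - f₀) (f₁ - f₀)
          + ∫ x, (f₁ x - f₀ x) ^ 2 * φ₀ x * Real.exp (2 * ((1 - t) * f₀ x + t * f₁ x)) ∂μ) ∧
    (∀ t : ℝ, 0 ≤ iteratedDeriv 2 g t) ∧
    ConvexOn ℝ Set.univ g ∧
    ((∀ t : ℝ, iteratedDeriv 2 g t = 0) → f₁ =ᵐ[μ] f₀) ∧
    (deriv g 0 = 0 → deriv g 1 = 0 → f₁ =ᵐ[μ] f₀) := by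
  intro g
  have hf₀b (x : X) : |f₀ x| ≤ M := (hbd x).1
  have hf₁b (x : X) : |f₁ x| ≤ M := (hbd x).2.1
  have hφb (x : X) : |φ₀ x| ≤ M := (abs_of_nonneg (hφ0 x)).trans_le (hbd x).2.2
  have hg' (t : ℝ) : HasDerivAt g _ t := hasDerivAt_vortexFunctionalSegment hBsymm hBadd hBsmul
    hf₀ hf₁ hφm hf₀b hf₁b hφb hf₀int hf₁int t
  have hg'' (t : ℝ) : HasDerivAt (deriv g) _ t := hasDerivAt_deriv_vortexFunctionalSegment
    hBsymm hBadd hBsmul hf₀ hf₁ hφm hf₀b hf₁b hφb hf₀int hf₁int t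
  have hiter (t : ℝ) : iteratedDeriv 2 g t = vortexSecondVariation μ B f₀ f₁ φ₀ t := by
    rw [iteratedDeriv_succ, iteratedDeriv_one]
    exact (hg'' t).deriv
  have hnonneg := vortexSecondVariation_nonneg (μ := μ) (f₀ := f₀) (f₁ := f₁) hBpos hφ0
  have hrigid (t : ℝ) (ht : iteratedDeriv 2 g t = 0) : f₁ =ᵐ[μ] f₀ :=
    ae_eq_of_vortexSecondVariation_eq_zero hBpos hφpos hf₀ hf₁ hφm hf₀b hf₁b hφb
      ((hiter t).symm.trans ht)
  have hmono : Monotone (deriv g) := monotone_of_deriv_nonneg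
    (fun t => (hg'' t).differentiableAt) fun t => (hg'' t).deriv ▸ hnonneg t
  refine ⟨hiter, fun t => hiter t ▸ hnonneg t,
    hmono.convexOn_univ_of_deriv fun t => (hg' t).differentiableAt,
    fun h => hrigid 0 (h 0), fun h₀ h₁ => hrigid (1 / 2) ?_⟩
  rw [iteratedDeriv_succ, iteratedDeriv_one]
  exact hmono.deriv_eq_zero_of_eq (h₀.trans h₁.symm) ⟨by norm_num, by norm_num⟩
end
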